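/- For every q > 0, every integer n ≥ 2 and every x ∈ [0,1]: R_{n,q}(t³,x) = x·v(q,x) + x(1 − v(q,x))/[n]_q² − ([n−1]_q [n−2]_q q² / [n]_q²) · x(1 − v(q,x)) v(q²,x), where t³ denotes the function t ↦ t³ on [0,1]. -/

import Mathlib

open Finset Filter

noncomputable section

/-- The q-integer `[n]_q = 1 + q + ⋯ + q^(n-1)`. -/
def qInt (q : ℝ) (n : ℕ) : ℝ := ∑ i ∈ Finset.range n, q ^ i

/-- The q-factorial `[n]_q!`. -/
def qFact (q : ℝ) : ℕ → ℝ
  | 0 => 1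
  | n + 1 => qFact q n * qInt q (n + 1)

/-- The q-binomial coefficient `[n k]_q`. -/
def qBinom (q : ℝ) (n k : ℕ) : ℝ := qFact q n / (qFact q k * qFact q (n - k))

/-- The Lupaş basis function `b_{nk}(q;x)`. -/
def lupasB (q : ℝ) (n k : ℕ) (x : ℝ) : ℝ :=
  qBinom q n k * q ^ (k * (k - 1) / 2) * x ^ k * (1 - x) ^ (n - k) /
    ∏ j ∈ Finset.range (n - 1), (1 - x + q ^ (j + 1) * x)

/-- The limit Lupaş basis function `b_{∞k}(q;x)` (for `0 < q < 1`, `x ∈ [0,1)`). -/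
def lupasBInf (q : ℝ) (k : ℕ) (x : ℝ) : ℝ :=
  q ^ (k * (k - 1) / 2) * (x / (1 - x)) ^ k /
    ((1 - q) ^ k * qFact q k * ∏' j : ℕ, (1 + q ^ j * (x / (1 - x))))

/-- The Lupaş q-analogue of the Bernstein operator `R_{n,q}(f,x)`. -/
def lupasR (q : ℝ) (n : ℕ) (f : ℝ → ℝ) (x : ℝ) : ℝ :=
  ∑ k ∈ Finset.range (n + 1), f (qInt q k / qInt q n) * lupasB q n k x

/-- The limit q-Lupaş operator `R_{∞,q}(f,x)` for `0 < q < 1`. -/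
def lupasRInfLow (q : ℝ) (f : ℝ → ℝ) (x : ℝ) : ℝ :=
  if x = 1 then f 1 else ∑' k : ℕ, f (1 - q ^ k) * lupasBInf q k x

/-- The limit q-Lupaş operator `R_{∞,q}(f,x)`: for `q > 1` it is defined by
reflection, `R_{∞,q}(f,x) = R_{∞,1/q}(g,1-x)` with `g(x) = f(1-x)`. -/
def lupasRInf (q : ℝ) (f : ℝ → ℝ) (x : ℝ) : ℝ :=
  if 1 < q then lupasRInfLow (1 / q) (fun t => f (1 - t)) (1 - x)
  else lupasRInfLow q f x

/-- The transform `v(q,x) = qx/(1-x+qx)`. -/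
def vq (q x : ℝ) : ℝ := q * x / (1 - x + q * x)

/-- `L_{n,q}(f,x) = R_{n,q}(f,x) - R_{∞,q}(f,x)`. -/
def lupasL (q : ℝ) (n : ℕ) (f : ℝ → ℝ) (x : ℝ) : ℝ :=
  lupasR q n f x - lupasRInf q f x

/-- The modulus of continuity `ω(f,t)` of `f` on `[0,1]`. -/
def omega1 (f : ℝ → ℝ) (t : ℝ) : ℝ :=
  sSup {d | ∃ x ∈ Set.Icc (0:ℝ) 1, ∃ y ∈ Set.Icc (0:ℝ) 1, |x - y| ≤ t ∧ d = |f x - f y|}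

/-- The second modulus of smoothness `ω₂(f,t)` of `f` on `[0,1]`. -/
def omega2 (f : ℝ → ℝ) (t : ℝ) : ℝ :=
  sSup {d | ∃ h, 0 ≤ h ∧ h ≤ t ∧ ∃ x, 0 ≤ x ∧ x ≤ 1 - 2 * h ∧
    d = |f (x + 2 * h) - 2 * f (x + h) + f x|}

/-!
With `w_k = q^(k(k-1)/2) [n k]_q x^k (1-x)^(n-k)` one has
`R_{n,q}(f,x) = ∑ f([k]/[n]) w_k / ∏_{j=1}^{n-1} (1-x+q^j x)`. Gauss's q-binomial theorem gives
`∑ w_k = ∏_{j<n} (1-x+q^j x)`, and the absorption identity `[k] [n k] = [n] [n-1 k-1]` (whose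
leftover `q^(k-1)` from the weight replaces `x` by `qx`) turns the falling moments into
`∑ [k][k-1]⋯[k-r+1] w_k = [n]⋯[n-r+1] q^(r(r-1)/2) x^r ∏_{j<n-r} (1-x+q^(j+r) x)`.
Since `[k]^3 = [k] + q(2+q)[k][k-1] + q^3[k][k-1][k-2]`, `R_{n,q}(t^3,x)` is a combination of three
such moments, and after cancelling the common product only the factors `1-x+qx` and `1-x+q^2x`,
the denominators of `v(q,x)` and `v(q^2,x)`, remain.
-/
lemma qInt_zero (q : ℝ) : qInt q 0 = 0 := rfl

lemma qInt_succ (q : ℝ) (n : ℕ) : qInt q (n + 1) = 1 + q * qInt q n := by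
  simp only [qInt, sum_range_succ', pow_succ', ← mul_sum, pow_zero]
  ring

lemma qInt_add (q : ℝ) (m l : ℕ) : qInt q (m + l) = qInt q m + q ^ m * qInt q l := by
  simp [qInt, sum_range_add, mul_sum, pow_add]

lemma qInt_pos {q : ℝ} (hq : 0 < q) {n : ℕ} (hn : n ≠ 0) : 0 < qInt q n :=
  sum_pos (fun i _ => pow_pos hq i) (nonempty_range_iff.mpr hn)

lemma qFact_pos {q : ℝ} (hq : 0 < q) : ∀ n, 0 < qFact q n
  | 0 => one_pos
  | n + 1 => mul_pos (qFact_pos hq n) (qInt_pos hq n.succ_ne_zero)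

lemma qInt_succ_mul_qBinom_succ_succ {q : ℝ} (hq : 0 < q) (n k : ℕ) :
    qInt q (k + 1) * qBinom q (n + 1) (k + 1) = qInt q (n + 1) * qBinom q n k := by
  have := (qFact_pos hq k).ne'
  have := (qFact_pos hq (n - k)).ne'
  have := (qInt_pos hq k.succ_ne_zero).ne'
  simp only [qBinom, Nat.add_sub_add_right, qFact]
  field_simp

lemma qInt_sub_mul_qBinom_succ {q : ℝ} (hq : 0 < q) {n k : ℕ} (hk : k ≤ n) :
    qInt q (n + 1 - k) * qBinom q (n + 1) k = qInt q (n + 1) * qBinom q n k := by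
  have := (qFact_pos hq k).ne'
  have := (qFact_pos hq (n - k)).ne'
  have := (qInt_pos hq (n - k).succ_ne_zero).ne'
  simp only [qBinom, Nat.sub_add_comm hk, qFact]
  field_simp

def lupasCoeff (q : ℝ) (n k : ℕ) : ℝ := qBinom q n k * q ^ k.choose 2

lemma lupasCoeff_zero_right {q : ℝ} (hq : 0 < q) (n : ℕ) : lupasCoeff q n 0 = 1 := by
  simp [lupasCoeff, qBinom, qFact, (qFact_pos hq n).ne']

lemma qInt_succ_mul_lupasCoeff_succ_succ {q : ℝ} (hq : 0 < q) (n k : ℕ) :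
    qInt q (k + 1) * lupasCoeff q (n + 1) (k + 1) =
      qInt q (n + 1) * q ^ k * lupasCoeff q n k := by
  rw [lupasCoeff, lupasCoeff, Nat.choose_succ_succ', Nat.choose_one_right, pow_add,
    ← mul_assoc, qInt_succ_mul_qBinom_succ_succ hq]
  ring

lemma qInt_sub_mul_lupasCoeff_succ {q : ℝ} (hq : 0 < q) {n k : ℕ} (hk : k ≤ n) :
    qInt q (n + 1 - k) * lupasCoeff q (n + 1) k = qInt q (n + 1) * lupasCoeff q n k := by
  rw [lupasCoeff, lupasCoeff, ← mul_assoc, qInt_sub_mul_qBinom_succ hq hk, mul_assoc]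

lemma sum_qInt_mul_lupasCoeff {q : ℝ} (hq : 0 < q) (g : ℕ → ℝ) (n : ℕ) (a b : ℝ) :
    ∑ k ∈ range (n + 2), qInt q k * g k * lupasCoeff q (n + 1) k * a ^ k * b ^ (n + 1 - k) =
      qInt q (n + 1) * a *
        ∑ k ∈ range (n + 1), g (k + 1) * lupasCoeff q n k * (q * a) ^ k * b ^ (n - k) := by
  rw [sum_range_succ', qInt_zero, mul_sum]
  simp only [zero_mul, add_zero]
  refine sum_congr rfl fun k _ => ?_
  rw [Nat.add_sub_add_right]
  linear_combination (g (k + 1) * a ^ (k + 1) * b ^ (n - k)) *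
    qInt_succ_mul_lupasCoeff_succ_succ hq n k

lemma sum_qInt_sub_mul_lupasCoeff {q : ℝ} (hq : 0 < q) (n : ℕ) (a b : ℝ) :
    ∑ k ∈ range (n + 2),
        q ^ k * qInt q (n + 1 - k) * lupasCoeff q (n + 1) k * a ^ k * b ^ (n + 1 - k) =
      qInt q (n + 1) * b *
        ∑ k ∈ range (n + 1), lupasCoeff q n k * (q * a) ^ k * b ^ (n - k) := by
  rw [sum_range_succ, Nat.sub_self, qInt_zero, mul_sum]
  simp only [mul_zero, zero_mul, add_zero]
  refine sum_congr rfl fun k hk => ?_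
  have hk : k ≤ n := Nat.lt_succ_iff.mp (mem_range.mp hk)
  have habs := qInt_sub_mul_lupasCoeff_succ hq hk
  rw [Nat.sub_add_comm hk] at habs ⊢
  linear_combination (q ^ k * a ^ k * b ^ (n - k + 1)) * habs

theorem sum_lupasCoeff_mul_pow {q : ℝ} (hq : 0 < q) (n : ℕ) (a b : ℝ) :
    ∑ k ∈ range (n + 1), lupasCoeff q n k * a ^ k * b ^ (n - k) =
      ∏ j ∈ range n, (b + q ^ j * a) := by
  induction n generalizing a with
  | zero => simp [lupasCoeff_zero_right hq]
  | succ n ih =>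
    -- `[n+1] = [k] + q^k [n+1-k]` splits `[n+1]` times the sum into the two absorption sums.
    have hsplit : ∀ k ∈ range (n + 2),
        qInt q (n + 1) * (lupasCoeff q (n + 1) k * a ^ k * b ^ (n + 1 - k)) =
          qInt q k * 1 * lupasCoeff q (n + 1) k * a ^ k * b ^ (n + 1 - k) +
            q ^ k * qInt q (n + 1 - k) * lupasCoeff q (n + 1) k * a ^ k * b ^ (n + 1 - k) := by
      intro k hk
      rw [← Nat.add_sub_cancel' (Nat.lt_succ_iff.mp (mem_range.mp hk)), qInt_add,
        Nat.add_sub_cancel_left]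
      ring
    apply mul_left_cancel₀ (qInt_pos hq n.succ_ne_zero).ne'
    rw [mul_sum, sum_congr rfl hsplit, sum_add_distrib, sum_qInt_mul_lupasCoeff hq,
      sum_qInt_sub_mul_lupasCoeff hq]
    simp only [one_mul]
    rw [ih, prod_range_succ']
    simp only [pow_succ, mul_assoc, pow_zero, one_mul]
    ring

def qDescFact (q : ℝ) (k r : ℕ) : ℝ := ∏ i ∈ range r, qInt q (k - i)

lemma qDescFact_zero_right (q : ℝ) (k : ℕ) : qDescFact q k 0 = 1 := prod_range_zero _

lemma qDescFact_succ_right (q : ℝ) (k r : ℕ) :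
    qDescFact q k (r + 1) = qInt q k * qDescFact q (k - 1) r := by
  simp only [qDescFact, prod_range_succ', Nat.sub_zero, Nat.sub_sub, add_comm 1]
  exact mul_comm _ _

lemma qDescFact_eq_zero_of_lt (q : ℝ) {k r : ℕ} (h : k < r) : qDescFact q k r = 0 :=
  prod_eq_zero (mem_range.2 h) (by rw [Nat.sub_self, qInt_zero])

lemma sum_qDescFact_mul_lupasCoeff_add {q : ℝ} (hq : 0 < q) (n r : ℕ) (a b : ℝ) :
    ∑ k ∈ range (n + r + 1),
        qDescFact q k r * lupasCoeff q (n + r) k * a ^ k * b ^ (n + r - k) =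
      qDescFact q (n + r) r * q ^ r.choose 2 * a ^ r *
        ∏ j ∈ range n, (b + q ^ (j + r) * a) := by
  induction r generalizing a with
  | zero => simpa [qDescFact_zero_right] using sum_lupasCoeff_mul_pow hq n a b
  | succ r ih =>
    simp only [qDescFact_succ_right, ← add_assoc]
    rw [sum_qInt_mul_lupasCoeff hq (fun k => qDescFact q (k - 1) r)]
    simp only [Nat.add_sub_cancel]
    have hprod : ∏ j ∈ range n, (b + q ^ (j + r) * (q * a)) =
        ∏ j ∈ range n, (b + q ^ (j + r + 1) * a) :=
      prod_congr rfl fun j _ => by ring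
    have hchoose : (r + 1).choose 2 = r + r.choose 2 := by
      rw [Nat.choose_succ_succ', Nat.choose_one_right]
    rw [ih, hprod, hchoose]
    ring

theorem sum_qDescFact_mul_lupasCoeff {q : ℝ} (hq : 0 < q) (N r : ℕ) (a b : ℝ) :
    ∑ k ∈ range (N + 1), qDescFact q k r * lupasCoeff q N k * a ^ k * b ^ (N - k) =
      qDescFact q N r * q ^ r.choose 2 * a ^ r *
        ∏ j ∈ range (N - r), (b + q ^ (j + r) * a) := by
  obtain hNr | hrN := lt_or_ge N r
  · rw [qDescFact_eq_zero_of_lt q hNr, zero_mul, zero_mul, zero_mul]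
    refine sum_eq_zero fun k hk => ?_
    rw [qDescFact_eq_zero_of_lt q ((mem_range.mp hk).trans_le hNr), zero_mul, zero_mul, zero_mul]
  · obtain ⟨n, rfl⟩ := Nat.exists_eq_add_of_le' hrN
    rw [Nat.add_sub_cancel]
    exact sum_qDescFact_mul_lupasCoeff_add hq n r a b

lemma qInt_pow_three (q : ℝ) (k : ℕ) :
    qInt q k ^ 3 = qDescFact q k 1 + q * (2 + q) * qDescFact q k 2 + q ^ 3 * qDescFact q k 3 := by
  simp only [qDescFact, prod_range_succ, prod_range_zero, one_mul, Nat.sub_zero]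
  match k with
  | 0 => simp [qInt_zero]
  | 1 => simp [qInt_zero, qInt_succ]
  | m + 2 =>
    simp only [Nat.add_sub_cancel, Nat.reduceSubDiff, qInt_succ q (m + 1), qInt_succ q m]
    ring

lemma prod_range_succ_shift (q a b : ℝ) (N r : ℕ) :
    ∏ j ∈ range (N + 1), (b + q ^ (j + r) * a) =
      (b + q ^ r * a) * ∏ j ∈ range N, (b + q ^ (j + (r + 1)) * a) := by
  rw [prod_range_succ', mul_comm, zero_add]
  congr 1
  exact prod_congr rfl fun j _ => by ring_nf

-- The factor `(b + q a) (b + q^2 a)` lets the three moments share the product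
-- `∏_{j < N-1}` for every `N`, although their own products are truncated differently.
theorem sum_qInt_pow_three_mul_lupasCoeff {q : ℝ} (hq : 0 < q) (N : ℕ) (a b : ℝ) :
    (∑ k ∈ range (N + 1), qInt q k ^ 3 * (lupasCoeff q N k * a ^ k * b ^ (N - k))) *
        ((b + q * a) * (b + q ^ 2 * a)) =
      (qInt q N * a * (b + q * a) * (b + q ^ 2 * a) +
          q ^ 2 * (2 + q) * qInt q N * qInt q (N - 1) * a ^ 2 * (b + q ^ 2 * a) +
          q ^ 6 * qInt q N * qInt q (N - 1) * qInt q (N - 2) * a ^ 3) *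
        ∏ j ∈ range (N - 1), (b + q ^ (j + 1) * a) := by
  have hsum : ∑ k ∈ range (N + 1), qInt q k ^ 3 * (lupasCoeff q N k * a ^ k * b ^ (N - k)) =
      ∑ k ∈ range (N + 1), qDescFact q k 1 * lupasCoeff q N k * a ^ k * b ^ (N - k) +
        q * (2 + q) *
          ∑ k ∈ range (N + 1), qDescFact q k 2 * lupasCoeff q N k * a ^ k * b ^ (N - k) +
        q ^ 3 *
          ∑ k ∈ range (N + 1), qDescFact q k 3 * lupasCoeff q N k * a ^ k * b ^ (N - k) := by
    simp only [mul_sum, ← sum_add_distrib, qInt_pow_three]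
    exact sum_congr rfl fun k _ => by ring
  rw [hsum, sum_qDescFact_mul_lupasCoeff hq, sum_qDescFact_mul_lupasCoeff hq,
    sum_qDescFact_mul_lupasCoeff hq]
  rcases N with _ | _ | _ | M
  · simp [qDescFact, qInt_zero]
  · simp [qDescFact, prod_range_succ, qInt_zero]
    ring
  · simp [qDescFact, prod_range_succ, qInt_zero, qInt_succ]
    ring
  · simp only [show M + 1 + 1 + 1 - 1 = M + 1 + 1 by omega,
      show M + 1 + 1 + 1 - 2 = M + 1 by omega, show M + 1 + 1 + 1 - 3 = M by omega,
      prod_range_succ_shift]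
    simp [qDescFact, prod_range_succ]
    ring

lemma lupasR_eq_sum_div (q : ℝ) (n : ℕ) (f : ℝ → ℝ) (x : ℝ) :
    lupasR q n f x =
      (∑ k ∈ range (n + 1),
          f (qInt q k / qInt q n) * (lupasCoeff q n k * x ^ k * (1 - x) ^ (n - k))) /
        ∏ j ∈ range (n - 1), (1 - x + q ^ (j + 1) * x) := by
  rw [lupasR, sum_div]
  refine sum_congr rfl fun k _ => ?_
  rw [lupasB, lupasCoeff, Nat.choose_two_right]
  ring

lemma one_sub_add_mul_pos {t x : ℝ} (ht : 0 < t) (hx : x ∈ Set.Icc (0 : ℝ) 1) :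
    0 < 1 - x + t * x := by
  rcases hx.2.lt_or_eq with hx1 | rfl
  · nlinarith [mul_nonneg ht.le hx.1]
  · simpa using ht

lemma lupasR_pow_three {q x : ℝ} (hq : 0 < q) (hx : x ∈ Set.Icc (0 : ℝ) 1) (n : ℕ) :
    lupasR q n (fun t => t ^ 3) x =
      (qInt q n * x * (1 - x + q * x) * (1 - x + q ^ 2 * x) +
          q ^ 2 * (2 + q) * qInt q n * qInt q (n - 1) * x ^ 2 * (1 - x + q ^ 2 * x) +
          q ^ 6 * qInt q n * qInt q (n - 1) * qInt q (n - 2) * x ^ 3) /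
        (qInt q n ^ 3 * ((1 - x + q * x) * (1 - x + q ^ 2 * x))) := by
  have hA : ∀ j : ℕ, 0 < 1 - x + q ^ j * x := fun j => one_sub_add_mul_pos (pow_pos hq j) hx
  have hA₁₂ : 0 < (1 - x + q * x) * (1 - x + q ^ 2 * x) := by
    simpa using mul_pos (hA 1) (hA 2)
  have hD : 0 < ∏ j ∈ range (n - 1), (1 - x + q ^ (j + 1) * x) := prod_pos fun j _ => hA (j + 1)
  have hcancel :=
    (div_eq_div_iff hD.ne' hA₁₂.ne').2 (sum_qInt_pow_three_mul_lupasCoeff hq n x (1 - x))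
  rw [lupasR_eq_sum_div]
  simp only [div_pow, div_mul_eq_mul_div, ← sum_div]
  rw [div_right_comm, hcancel, div_div, mul_comm _ (qInt q n ^ 3)]

theorem lupasR_third_moment (q : ℝ) (hq : 0 < q) (n : ℕ) (hn : 2 ≤ n)
    (x : ℝ) (hx : x ∈ Set.Icc (0:ℝ) 1) :
    lupasR q n (fun t => t ^ 3) x =
      x * vq q x + x * (1 - vq q x) / (qInt q n) ^ 2 -
        qInt q (n - 1) * qInt q (n - 2) * q ^ 2 / (qInt q n) ^ 2 *
          (x * (1 - vq q x) * vq (q ^ 2) x) := by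
  have hA₁ : 0 < 1 - x + q * x := one_sub_add_mul_pos hq hx
  have hA₂ : 0 < 1 - x + q ^ 2 * x := one_sub_add_mul_pos (pow_pos hq 2) hx
  have hN : 0 < qInt q n := qInt_pos hq (by omega)
  obtain ⟨m, rfl⟩ : ∃ m, n = m + 2 := ⟨n - 2, by omega⟩
  rw [lupasR_pow_three hq hx, Nat.add_sub_cancel, show m + 2 - 1 = m + 1 by omega, vq, vq]
  rw [qInt_succ q (m + 1), qInt_succ q m] at hN ⊢
  field_simp
  ring
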